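/- Let ξ̃ ≠ 0, μ̃ ∈ ℝ, σ̃ > 0, and let X be a random variable with the GEV distribution G_{ξ̃}(·; μ̃, σ̃). Then the Shannon entropy of X is H(X) = log σ̃ + (ξ̃ + 1)γ + 1. -/

import Mathlib

open MeasureTheory Filter Real Set

/-- The Shannon entropy `H(f) = -∫_{{f > 0}} f x * log (f x) dx` of a density `f`
with respect to Lebesgue measure. -/
noncomputable def shannonEntropy (f : ℝ → ℝ) : ℝ :=
  -∫ x in {x : ℝ | 0 < f x}, f x * Real.log (f x)

/-- Density of the (power) GEV family with sign `s` (`s = 1` gives the log-GEV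
density `l_{1,ξ}` on positive support, `s = -1` the negative log-GEV density
`l_{2,ξ}` on negative support):
`l(x) = (1/(σ|x|)) (1 + s ξ (log|x| - μ)/σ)_+^{-1-1/ξ} exp(-(1 + s ξ (log|x| - μ)/σ)_+^{-1/ξ})`. -/
noncomputable def pgevPdf (s ξ μ σ x : ℝ) : ℝ :=
  if 0 < s * x ∧ 0 < 1 + s * ξ * ((Real.log |x| - μ) / σ) then
    (1 / (σ * |x|)) * (1 + s * ξ * ((Real.log |x| - μ) / σ)) ^ (-1 - 1 / ξ) *
      Real.exp (-(1 + s * ξ * ((Real.log |x| - μ) / σ)) ^ (-1 / ξ))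
  else 0

/-- Density of the GEV distribution `G_ξ(·; μ, σ)`:
`g(x) = (1/σ) (1 + ξ (x - μ)/σ)_+^{-1-1/ξ} exp(-(1 + ξ (x - μ)/σ)_+^{-1/ξ})`. -/
noncomputable def gevPdf (ξ μ σ x : ℝ) : ℝ :=
  if 0 < 1 + (ξ / σ) * (x - μ) then
    (1 / σ) * (1 + (ξ / σ) * (x - μ)) ^ (-1 - 1 / ξ) *
      Real.exp (-(1 + (ξ / σ) * (x - μ)) ^ (-1 / ξ))
  else 0

/-!
The standardisation `t = (1 + ξ (x - μ) / σ) ^ (-1 / ξ)` is inverted by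
`x = μ + σ / ξ * (t ^ (-ξ) - 1)`, which maps `(0, ∞)` bijectively onto the support of the
density `g` and turns `g(x) dx` into `exp (-t) dt`, with
`log g(x) = -log σ + (ξ + 1) log t - t`. So `H = log σ - (ξ + 1) E[log T] + E[T]` for a standard
exponential `T`, and `E[log T] = Γ'(1) = -γ`, `E[T] = 1`.
-/

lemma integral_log_mul_exp_neg :
    ∫ t in Ioi 0, log t * exp (-t) = -eulerMascheroniConstant := by
  have hGammaIntegral := Complex.hasDerivAt_GammaIntegral (s := 1) (by norm_num)
  have hIntegral : ∫ t : ℝ in Ioi 0, (t : ℂ) ^ ((1 : ℂ) - 1) * (log t * exp (-t)) =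
      ((∫ t in Ioi 0, log t * exp (-t) : ℝ) : ℂ) := by
    rw [← integral_complex_ofReal]
    refine setIntegral_congr_fun measurableSet_Ioi fun t _ => ?_
    push_cast
    rw [sub_self, Complex.cpow_zero, one_mul]
  rw [hIntegral] at hGammaIntegral
  have hGamma : HasDerivAt Gamma (∫ t in Ioi 0, log t * exp (-t)) 1 := by
    refine (by simpa using hGammaIntegral.real_of_complex :
      HasDerivAt (fun x : ℝ => (Complex.GammaIntegral x).re) _ 1).congr_of_eventuallyEq ?_
    filter_upwards [Ioi_mem_nhds one_pos] with x hx
    rw [← Complex.Gamma_eq_integral (by simpa using hx), Complex.Gamma_ofReal,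
      Complex.ofReal_re]
  exact hGamma.unique hasDerivAt_Gamma_one

-- A non-integrable function has Bochner integral `0`, while the integral above is `-γ ≠ 0`.
lemma integrableOn_log_mul_exp_neg : IntegrableOn (fun t => log t * exp (-t)) (Ioi 0) := by
  by_contra h
  have := integral_log_mul_exp_neg
  rw [integral_undef h] at this
  linarith [one_half_lt_eulerMascheroniConstant]

lemma integrableOn_mul_exp_neg : IntegrableOn (fun t => t * exp (-t)) (Ioi 0) :=
  (GammaIntegral_convergent two_pos).congr_fun (fun t _ => by norm_num [mul_comm])
    measurableSet_Ioi

lemma integral_mul_exp_neg : ∫ t in Ioi 0, t * exp (-t) = 1 := by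
  rw [← Gamma_two, Gamma_eq_integral two_pos]
  exact setIntegral_congr_fun measurableSet_Ioi fun t _ => by norm_num [mul_comm]

lemma integral_exp_neg_mul_add_mul_log_sub (a b : ℝ) :
    ∫ t in Ioi 0, exp (-t) * (a + b * log t - t) = a - b * eulerMascheroniConstant - 1 := by
  have hExp : IntegrableOn (fun t => exp (-t)) (Ioi 0) := by
    simpa using exp_neg_integrableOn_Ioi 0 one_pos
  have hSplit : (fun t => exp (-t) * (a + b * log t - t)) =
      fun t => a * exp (-t) + b * (log t * exp (-t)) - t * exp (-t) := by
    funext t; ring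
  have hSum : IntegrableOn (fun t => a * exp (-t) + b * (log t * exp (-t))) (Ioi 0) :=
    (hExp.const_mul a).add (integrableOn_log_mul_exp_neg.const_mul b)
  rw [hSplit, integral_sub hSum integrableOn_mul_exp_neg, integral_add (hExp.const_mul a)
      (integrableOn_log_mul_exp_neg.const_mul b), integral_const_mul, integral_const_mul,
    integral_exp_neg_Ioi_zero, integral_log_mul_exp_neg, integral_mul_exp_neg]
  ring

noncomputable def gevOfExp (ξ μ σ t : ℝ) : ℝ := μ + σ / ξ * (t ^ (-ξ) - 1)

section gevOfExp

variable {ξ σ : ℝ} (μ : ℝ)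

lemma one_add_mul_gevOfExp_sub (hξ : ξ ≠ 0) (hσ : σ ≠ 0) (t : ℝ) :
    1 + ξ / σ * (gevOfExp ξ μ σ t - μ) = t ^ (-ξ) := by
  simp only [gevOfExp]
  field_simp
  ring

lemma image_gevOfExp_Ioi (hξ : ξ ≠ 0) (hσ : σ ≠ 0) :
    gevOfExp ξ μ σ '' Ioi 0 = {x | 0 < 1 + ξ / σ * (x - μ)} := by
  ext x
  constructor
  · rintro ⟨t, ht, rfl⟩
    simpa only [mem_ofPred_eq, one_add_mul_gevOfExp_sub μ hξ hσ] using rpow_pos_of_pos ht _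
  · intro hx
    refine ⟨(1 + ξ / σ * (x - μ)) ^ (-1 / ξ), rpow_pos_of_pos hx _, ?_⟩
    rw [gevOfExp, ← rpow_mul hx.le, (by field_simp : -1 / ξ * -ξ = 1), rpow_one]
    field_simp
    ring

lemma injOn_gevOfExp (hξ : ξ ≠ 0) (hσ : σ ≠ 0) : InjOn (gevOfExp ξ μ σ) (Ioi 0) := by
  intro t₁ ht₁ t₂ ht₂ h
  have hPow : t₁ ^ (-ξ) = t₂ ^ (-ξ) := by
    rw [← one_add_mul_gevOfExp_sub μ hξ hσ, ← one_add_mul_gevOfExp_sub μ hξ hσ, h]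
  exact rpow_left_injOn (neg_ne_zero.2 hξ) (mem_Ioi.1 ht₁).le (mem_Ioi.1 ht₂).le hPow

lemma hasDerivAt_gevOfExp (hξ : ξ ≠ 0) {t : ℝ} (ht : 0 < t) :
    HasDerivAt (gevOfExp ξ μ σ) (-σ * t ^ (-ξ - 1)) t := by
  have h := (((hasDerivAt_rpow_const (p := -ξ) (Or.inl ht.ne')).sub_const 1).const_mul
    (σ / ξ)).const_add μ
  rwa [show -σ * t ^ (-ξ - 1) = σ / ξ * (-ξ * t ^ (-ξ - 1)) by field_simp]

lemma gevPdf_gevOfExp (hξ : ξ ≠ 0) (hσ : σ ≠ 0) {t : ℝ} (ht : 0 < t) :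
    gevPdf ξ μ σ (gevOfExp ξ μ σ t) = t ^ (ξ + 1) * exp (-t) / σ := by
  rw [gevPdf, one_add_mul_gevOfExp_sub μ hξ hσ, if_pos (rpow_pos_of_pos ht _),
    ← rpow_mul ht.le, ← rpow_mul ht.le, (by field_simp; ring : -ξ * (-1 - 1 / ξ) = ξ + 1),
    (by field_simp : -ξ * (-1 / ξ) = 1), rpow_one]
  ring

lemma setIntegral_gevPdf_mul (hξ : ξ ≠ 0) (hσ : 0 < σ) (h : ℝ → ℝ) :
    ∫ x in {x | 0 < 1 + ξ / σ * (x - μ)}, gevPdf ξ μ σ x * h x =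
      ∫ t in Ioi 0, exp (-t) * h (gevOfExp ξ μ σ t) := by
  rw [← image_gevOfExp_Ioi μ hξ hσ.ne', integral_image_eq_integral_abs_deriv_smul
    measurableSet_Ioi (fun t ht => (hasDerivAt_gevOfExp μ hξ ht).hasDerivWithinAt)
    (injOn_gevOfExp μ hξ hσ.ne')]
  refine setIntegral_congr_fun measurableSet_Ioi fun t (ht : 0 < t) => ?_
  have hJacobian : |-σ * t ^ (-ξ - 1)| * (t ^ (ξ + 1) * exp (-t) / σ) = exp (-t) := by
    rw [abs_mul, abs_neg, abs_of_pos hσ, abs_of_pos (rpow_pos_of_pos ht _)]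
    field_simp
    rw [← rpow_add ht, (by ring : -ξ - 1 + (ξ + 1) = 0), rpow_zero]
  rw [smul_eq_mul, gevPdf_gevOfExp μ hξ hσ.ne' ht, ← mul_assoc, hJacobian]

lemma log_gevPdf_gevOfExp (hξ : ξ ≠ 0) (hσ : 0 < σ) {t : ℝ} (ht : 0 < t) :
    log (gevPdf ξ μ σ (gevOfExp ξ μ σ t)) = -log σ + (ξ + 1) * log t - t := by
  rw [gevPdf_gevOfExp μ hξ hσ.ne' ht, log_div (by positivity) hσ.ne',
    log_mul (by positivity) (exp_ne_zero _), log_rpow ht, log_exp]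
  ring

end gevOfExp

lemma setOf_gevPdf_pos (ξ μ : ℝ) {σ : ℝ} (hσ : 0 < σ) :
    {x | 0 < gevPdf ξ μ σ x} = {x | 0 < 1 + ξ / σ * (x - μ)} := by
  ext x
  simp only [mem_ofPred_eq, gevPdf]
  split_ifs with hx
  · simpa [hx] using by positivity
  · simpa using hx

theorem stmt_19_general (ξ μ σ : ℝ) (hξ : ξ ≠ 0) (hσ : 0 < σ) :
    shannonEntropy (gevPdf ξ μ σ) =
      Real.log σ + (ξ + 1) * Real.eulerMascheroniConstant + 1 := by
  have hIntegrand : ∫ t in Ioi 0, exp (-t) * log (gevPdf ξ μ σ (gevOfExp ξ μ σ t)) =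
      ∫ t in Ioi 0, exp (-t) * (-log σ + (ξ + 1) * log t - t) :=
    setIntegral_congr_fun measurableSet_Ioi fun t ht =>
      by rw [log_gevPdf_gevOfExp μ hξ hσ ht]
  rw [shannonEntropy, setOf_gevPdf_pos ξ μ hσ, setIntegral_gevPdf_mul μ hξ hσ, hIntegrand,
    integral_exp_neg_mul_add_mul_log_sub]
  ring

/-- For `ξ̃ ≠ 0`, `σ̃ > 0`, if `X` is a random variable with the GEV
distribution `G_{ξ̃}(·; μ̃, σ̃)` (density `gevPdf ξ̃ μ̃ σ̃`), then the Shannon entropy of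
`X` is `H(X) = log σ̃ + (ξ̃ + 1)γ + 1`. -/
theorem stmt_19 {Ω : Type*} [MeasurableSpace Ω] (P : Measure Ω) [IsProbabilityMeasure P]
    (ξ μ σ : ℝ) (hξ : ξ ≠ 0) (hσ : 0 < σ)
    (X : Ω → ℝ) (hXm : Measurable X)
    (hX : Measure.map X P = MeasureTheory.Measure.withDensity volume
      (fun x => ENNReal.ofReal (gevPdf ξ μ σ x))) :
    shannonEntropy (gevPdf ξ μ σ) =
      Real.log σ + (ξ + 1) * Real.eulerMascheroniConstant + 1 :=
  stmt_19_general ξ μ σ hξ hσ
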